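/- arXiv:2506.16870 — 6 statements merged into one kernel-verified Lean document; each statement's English description precedes it below -/
import Mathlib

section
/- Let r > 0, let p : ℝ → ℝ³ be differentiable at t with p(t) ≠ 0, let θ : ℝ → ℝ be differentiable at t with θ(t) ∈ (0, π/2) and sin θ(s) = r/‖p(s)‖ for all s in a neighborhood of t. Set b(t) = p(t)/‖p(t)‖ and w(t) = p'(t)/r. Then θ'(t) = −(sin²θ(t)/cos θ(t))·⟨b(t), w(t)⟩. -/
open scoped RealInnerProductSpace

theorem angle_dynamics
    (r : ℝ) (hr : 0 < r)
    (p : ℝ → EuclideanSpace ℝ (Fin 3)) (t : ℝ)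
    (p' : EuclideanSpace ℝ (Fin 3))
    (hp : HasDerivAt p p' t) (hpt : p t ≠ 0)
    (θ : ℝ → ℝ) (θ' : ℝ)
    (hθ : HasDerivAt θ θ' t)
    (hθt : θ t ∈ Set.Ioo 0 (Real.pi / 2))
    (hsin : ∀ᶠ s in nhds t, Real.sin (θ s) = r / ‖p s‖)
    (b w : EuclideanSpace ℝ (Fin 3))
    (hb : b = ‖p t‖⁻¹ • p t) (hw : w = r⁻¹ • p') :
    θ' = -(Real.sin (θ t) ^ 2 / Real.cos (θ t)) * ⟪b, w⟫ := by
  have hnpt : (0:ℝ) < ‖p t‖ := norm_pos_iff.2 hpt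
  have hcos : 0 < Real.cos (θ t) := Real.cos_pos_of_mem_Ioo
    ⟨by linarith [hθt.1, Real.pi_pos], hθt.2⟩
  -- derivative of the norm
  have h1 : HasDerivAt (fun s => Real.sqrt (‖p s‖ ^ 2))
      (2 * ⟪p t, p'⟫ / (2 * Real.sqrt (‖p t‖ ^ 2))) t :=
    (hp.norm_sq).sqrt (by positivity)
  have h1' : HasDerivAt (fun s => ‖p s‖) (⟪p t, p'⟫ / ‖p t‖) t := by
    have he : (fun s => Real.sqrt (‖p s‖ ^ 2)) = fun s => ‖p s‖ := by
      funext s; rw [Real.sqrt_sq (norm_nonneg _)]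
    rw [he, Real.sqrt_sq (norm_nonneg _)] at h1
    convert h1 using 1
    field_simp
  -- derivative of r / ‖p s‖
  have h2 : HasDerivAt (fun s => r / ‖p s‖)
      (r * -(⟪p t, p'⟫ / ‖p t‖ / ‖p t‖ ^ 2)) t := by
    simpa [div_eq_mul_inv] using (h1'.inv (ne_of_gt hnpt)).const_mul r
  -- derivative of sin ∘ θ
  have h3 : HasDerivAt (fun s => Real.sin (θ s)) (Real.cos (θ t) * θ') t := hθ.sin
  have h3' : HasDerivAt (fun s => r / ‖p s‖) (Real.cos (θ t) * θ') t :=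
    h3.congr_of_eventuallyEq (hsin.mono fun s hs => hs.symm)
  have hkey : Real.cos (θ t) * θ' = r * -(⟪p t, p'⟫ / ‖p t‖ / ‖p t‖ ^ 2) :=
    h3'.unique h2
  have hst : Real.sin (θ t) = r / ‖p t‖ := hsin.self_of_nhds
  have hinner : ⟪b, w⟫ = ‖p t‖⁻¹ * (r⁻¹ * ⟪p t, p'⟫) := by
    rw [hb, hw, real_inner_smul_left, real_inner_smul_right]
  rw [hinner, hst]
  field_simp
  field_simp at hkey
  nlinarith [hkey, sq_nonneg (‖p t‖), hnpt, hcos]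
end

section
/- Let b* ∈ ℝ³ be a fixed unit vector and x* ∈ ℝ a fixed constant. Let b : ℝ → ℝ³, x : ℝ → ℝ, w : ℝ → ℝ³ be such that at time t: ‖b(t)‖ = 1, b is differentiable at t with b'(t) = x(t)·Π_{b(t)} w(t), and x is differentiable at t with x'(t) = −x(t)²·⟨b(t), w(t)⟩. Define V₁(s) = ½‖b(s) − b*‖² + ½(x(s) − x*)². Then V₁ is differentiable at t with V₁'(t) = ⟨w(t), x(t)·Π_{b(t)}(b(t) − b*) − x(t)²·(x(t) − x*)·b(t)⟩. -/
open scoped RealInnerProductSpace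

/-- Orthogonal projection onto the plane orthogonal to the unit vector `b`. -/
noncomputable def proj (b v : EuclideanSpace ℝ (Fin 3)) : EuclideanSpace ℝ (Fin 3) :=
  v - ⟪b, v⟫ • b

theorem lyapunov_V1_derivative
    (bstar : EuclideanSpace ℝ (Fin 3)) (hbstar : ‖bstar‖ = 1)
    (xstar : ℝ)
    (b w : ℝ → EuclideanSpace ℝ (Fin 3)) (x : ℝ → ℝ) (t : ℝ)
    (hbt : ‖b t‖ = 1)
    (hb : HasDerivAt b (x t • proj (b t) (w t)) t)
    (hx : HasDerivAt x (-(x t) ^ 2 * ⟪b t, w t⟫) t)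
    (V₁ : ℝ → ℝ)
    (hV₁ : ∀ s, V₁ s = 1 / 2 * ‖b s - bstar‖ ^ 2 + 1 / 2 * (x s - xstar) ^ 2) :
    HasDerivAt V₁
      ⟪w t, x t • proj (b t) (b t - bstar) - ((x t) ^ 2 * (x t - xstar)) • b t⟫ t := by
  have hVfun : V₁ = fun s => 1 / 2 * ⟪b s - bstar, b s - bstar⟫ + 1 / 2 * (x s - xstar) ^ 2 := by
    funext s
    rw [hV₁ s, real_inner_self_eq_norm_sq]
  have hδ : HasDerivAt (fun s => b s - bstar) (x t • proj (b t) (w t)) t := hb.sub_const _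
  have h1 : HasDerivAt (fun s => ⟪b s - bstar, b s - bstar⟫)
      (2 * ⟪x t • proj (b t) (w t), b t - bstar⟫) t := by
    have h := hδ.inner ℝ hδ
    convert h using 1
    · rfl
    · rfl
    rw [real_inner_comm (b t - bstar)]
    ring
  have h2 : HasDerivAt (fun s => (x s - xstar) ^ 2)
      (2 * ((-(x t) ^ 2 * ⟪b t, w t⟫) * (x t - xstar))) t := by
    have h := (hx.sub_const xstar).pow 2
    convert h using 1
    · rfl
    · rfl
    · rfl
    simp
    ring
  have hsum := (h1.const_mul (1 / 2 : ℝ)).add (h2.const_mul (1 / 2 : ℝ))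
  rw [hVfun]
  convert hsum using 1
  · rfl
  · rfl
  · rfl
  simp only [proj, inner_sub_left, inner_sub_right, inner_smul_left, inner_smul_right,
    real_inner_comm (b t) (w t), real_inner_comm (w t) bstar, real_inner_comm (b t) bstar,
    RCLike.ofReal_real_eq_id, id, starRingEnd_apply, star_trivial]
  ring
end

section
/- Let b, b* ∈ ℝ³ be unit vectors, x ∈ ℝ with x ≠ 0, x* ∈ ℝ, and k₁, k₂ > 0. Set δ₁ = b − b*, δ₂ = x − x*, and define the desired scaled relative velocity w_d = (k₁/x)·Π_b b* + (k₂/x²)·δ₂·b. Then ⟨x·Π_b δ₁ − x²·δ₂·b, w_d⟩ = −k₁·⟨δ₁, Π_b δ₁⟩ − k₂·δ₂² ≤ 0, where Π_b x := x − ⟨b,x⟩b. -/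
/-!
Since `b` is a unit vector, `Π_b b = 0`, so `Π_b δ₁ = -Π_b b*` and the desired velocity is
`w_d = -(k₁/x) Π_b δ₁ + (k₂/x²) δ₂ b`. As `Π_b δ₁ ⟂ b`, the cross terms of the inner product vanish,
leaving `-k₁ ‖Π_b δ₁‖² - k₂ δ₂²`; finally `⟨δ₁, Π_b δ₁⟩ = ‖Π_b δ₁‖²` because `Π_b` is an
orthogonal projection.
-/

open scoped RealInnerProductSpace

section proj

variable {b : EuclideanSpace ℝ (Fin 3)}

theorem inner_proj_right_eq_zero (hb : ‖b‖ = 1) (v : EuclideanSpace ℝ (Fin 3)) :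
    ⟪b, proj b v⟫ = 0 := by
  rw [proj, inner_sub_right, real_inner_smul_right, inner_self_eq_one_of_norm_eq_one hb, mul_one,
    sub_self]

theorem proj_self (hb : ‖b‖ = 1) : proj b b = 0 := by
  rw [proj, inner_self_eq_one_of_norm_eq_one hb, one_smul, sub_self]

theorem proj_sub (u v : EuclideanSpace ℝ (Fin 3)) :
    proj b (u - v) = proj b u - proj b v := by
  simp only [proj, inner_sub_right, sub_smul]
  abel

theorem proj_self_sub (hb : ‖b‖ = 1) (v : EuclideanSpace ℝ (Fin 3)) :
    proj b (b - v) = -proj b v := by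
  rw [proj_sub, proj_self hb, zero_sub]

theorem inner_proj_self (hb : ‖b‖ = 1) (v : EuclideanSpace ℝ (Fin 3)) :
    ⟪v, proj b v⟫ = ‖proj b v‖ ^ 2 := by
  have hv : v = proj b v + ⟪b, v⟫ • b := by rw [proj, sub_add_cancel]
  nth_rw 1 [hv]
  rw [inner_add_left, real_inner_smul_left, real_inner_comm, inner_proj_right_eq_zero hb,
    mul_zero, add_zero, real_inner_self_eq_norm_sq]

end proj

theorem desired_velocity_dissipation_general
    (b bstar : EuclideanSpace ℝ (Fin 3))
    (hb : ‖b‖ = 1)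
    (x k₁ k₂ : ℝ) (hx : x ≠ 0) (hk₁ : 0 < k₁) (hk₂ : 0 < k₂)
    (δ₁ : EuclideanSpace ℝ (Fin 3)) (hδ₁ : δ₁ = b - bstar)
    (δ₂ : ℝ)
    (w_d : EuclideanSpace ℝ (Fin 3))
    (hw_d : w_d = (k₁ / x) • proj b bstar + (k₂ / x ^ 2 * δ₂) • b) :
    ⟪x • proj b δ₁ - (x ^ 2 * δ₂) • b, w_d⟫ = -(k₁ * ⟪δ₁, proj b δ₁⟫) - k₂ * δ₂ ^ 2 ∧
    ⟪x • proj b δ₁ - (x ^ 2 * δ₂) • b, w_d⟫ ≤ 0 := by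
  have hw : w_d = -(k₁ / x) • proj b δ₁ + (k₂ / x ^ 2 * δ₂) • b := by
    rw [hw_d, hδ₁, proj_self_sub hb, smul_neg, neg_smul, neg_neg]
  have hpb : ⟪proj b δ₁, b⟫ = 0 := by rw [real_inner_comm, inner_proj_right_eq_zero hb]
  have key : ⟪x • proj b δ₁ - (x ^ 2 * δ₂) • b, w_d⟫ = -(k₁ * ‖proj b δ₁‖ ^ 2) - k₂ * δ₂ ^ 2 := by
    rw [hw]
    simp only [inner_sub_left, inner_add_right, real_inner_smul_left, real_inner_smul_right,
      inner_proj_right_eq_zero hb, hpb, real_inner_self_eq_norm_sq, hb]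
    field_simp
    ring
  rw [inner_proj_self hb, key]
  exact ⟨rfl, by
    linarith [mul_nonneg hk₁.le (sq_nonneg ‖proj b δ₁‖), mul_nonneg hk₂.le (sq_nonneg δ₂)]⟩

theorem desired_velocity_dissipation
    (b bstar : EuclideanSpace ℝ (Fin 3))
    (hb : ‖b‖ = 1) (hbstar : ‖bstar‖ = 1)
    (x xstar k₁ k₂ : ℝ) (hx : x ≠ 0) (hk₁ : 0 < k₁) (hk₂ : 0 < k₂)
    (δ₁ : EuclideanSpace ℝ (Fin 3)) (hδ₁ : δ₁ = b - bstar)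
    (δ₂ : ℝ) (hδ₂ : δ₂ = x - xstar)
    (w_d : EuclideanSpace ℝ (Fin 3))
    (hw_d : w_d = (k₁ / x) • proj b bstar + (k₂ / x ^ 2 * δ₂) • b) :
    ⟪x • proj b δ₁ - (x ^ 2 * δ₂) • b, w_d⟫ = -(k₁ * ⟪δ₁, proj b δ₁⟫) - k₂ * δ₂ ^ 2 ∧
    ⟪x • proj b δ₁ - (x ^ 2 * δ₂) • b, w_d⟫ ≤ 0 :=
  desired_velocity_dissipation_general b bstar hb x k₁ k₂ hx hk₁ hk₂ δ₁ hδ₁ δ₂ w_d hw_d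
end

section
/- Consider the bearing-angle target-tracking system. Let r > 0 be a constant, ρ ∈ ℝ³ a constant, b* ∈ ℝ³ a constant unit vector, x* ∈ ℝ a constant, k₁, k₂, k_r > 0, K₃ a positive semidefinite symmetric 3×3 matrix, and K_ρ a positive definite symmetric 3×3 matrix. Let b, w, ρ̂ : ℝ → ℝ³, x, r̂ : ℝ → ℝ be differentiable at t with ‖b(t)‖ = 1 and x(t) ≠ 0, let w_d(s) = (k₁/x(s))·Π_{b(s)} b* + (k₂/x(s)²)·(x(s) − x*)·b(s) be differentiable at t, and set δ₁ = b − b*, δ₂ = x − x*, δ₃ = w − w_d, u₀ = ρ̂ − w_d' − x·Π_b b* − x²·δ₂·b + K₃ δ₃. Suppose at time t: b' = x·Π_b w, x' = −x²·⟨b, w⟩, w' = ρ − (r̂/r)·u₀, r̂' = k_r·⟨δ₃, u₀⟩, and ρ̂' = K_ρ δ₃. Define V₃(s) = ½‖δ₁(s)‖² + ½δ₂(s)² + ½‖δ₃(s)‖² + (1/(2 k_r r))·(r − r̂(s))² + ½·⟨ρ − ρ̂(s), K_ρ⁻¹ (ρ − ρ̂(s))⟩. Then V₃ is differentiable at t with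 V₃'(t) = −k₁·⟨δ₁, Π_b δ₁⟩ − k₂·δ₂² − ⟨δ₃, K₃ δ₃⟩ ≤ 0. -/
open scoped RealInnerProductSpace

set_option maxHeartbeats 1000000 in
theorem lyapunov_V3_derivative
    (r : ℝ) (hr : 0 < r)
    (ρ : EuclideanSpace ℝ (Fin 3))
    (bstar : EuclideanSpace ℝ (Fin 3)) (hbstar : ‖bstar‖ = 1)
    (xstar k₁ k₂ k_r : ℝ) (hk₁ : 0 < k₁) (hk₂ : 0 < k₂) (hk_r : 0 < k_r)
    (K₃ K_ρ : Matrix (Fin 3) (Fin 3) ℝ)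
    (hK₃ : K₃.PosSemidef) (hK_ρ : K_ρ.PosDef)
    (b w ρhat : ℝ → EuclideanSpace ℝ (Fin 3)) (x rhat : ℝ → ℝ) (t : ℝ)
    (hbt : ‖b t‖ = 1) (hxt : x t ≠ 0)
    (w_d : ℝ → EuclideanSpace ℝ (Fin 3))
    (hw_d : ∀ s, w_d s =
      (k₁ / x s) • proj (b s) bstar + (k₂ / (x s) ^ 2 * (x s - xstar)) • b s)
    (w_d' : EuclideanSpace ℝ (Fin 3)) (hwd : HasDerivAt w_d w_d' t)
    (δ₁ : ℝ → EuclideanSpace ℝ (Fin 3)) (hδ₁ : ∀ s, δ₁ s = b s - bstar)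
    (δ₂ : ℝ → ℝ) (hδ₂ : ∀ s, δ₂ s = x s - xstar)
    (δ₃ : ℝ → EuclideanSpace ℝ (Fin 3)) (hδ₃ : ∀ s, δ₃ s = w s - w_d s)
    (u₀ : EuclideanSpace ℝ (Fin 3))
    (hu₀ : u₀ = ρhat t - w_d' - x t • proj (b t) bstar - ((x t) ^ 2 * δ₂ t) • b t +
      Matrix.toEuclideanLin K₃ (δ₃ t))
    (hb : HasDerivAt b (x t • proj (b t) (w t)) t)
    (hx : HasDerivAt x (-(x t) ^ 2 * ⟪b t, w t⟫) t)
    (hw : HasDerivAt w (ρ - (rhat t / r) • u₀) t)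
    (hrhat : HasDerivAt rhat (k_r * ⟪δ₃ t, u₀⟫) t)
    (hρhat : HasDerivAt ρhat (Matrix.toEuclideanLin K_ρ (δ₃ t)) t)
    (V₃ : ℝ → ℝ)
    (hV₃ : ∀ s, V₃ s = 1 / 2 * ‖δ₁ s‖ ^ 2 + 1 / 2 * (δ₂ s) ^ 2 + 1 / 2 * ‖δ₃ s‖ ^ 2 +
      1 / (2 * k_r * r) * (r - rhat s) ^ 2 +
      1 / 2 * ⟪ρ - ρhat s, Matrix.toEuclideanLin K_ρ⁻¹ (ρ - ρhat s)⟫) :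
    HasDerivAt V₃
      (-(k₁ * ⟪δ₁ t, proj (b t) (δ₁ t)⟫) - k₂ * (δ₂ t) ^ 2 -
        ⟪δ₃ t, Matrix.toEuclideanLin K₃ (δ₃ t)⟫) t ∧
    -(k₁ * ⟪δ₁ t, proj (b t) (δ₁ t)⟫) - k₂ * (δ₂ t) ^ 2 -
        ⟪δ₃ t, Matrix.toEuclideanLin K₃ (δ₃ t)⟫ ≤ 0 := by
  classical
  have hrne : r ≠ 0 := ne_of_gt hr
  have hkrne : k_r ≠ 0 := ne_of_gt hk_r
  have hBB : ⟪b t, b t⟫ = (1 : ℝ) := by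
    rw [real_inner_self_eq_norm_sq, hbt]; norm_num
  have hSS : ⟪bstar, bstar⟫ = (1 : ℝ) := by
    rw [real_inner_self_eq_norm_sq, hbstar]; norm_num
  -- derivatives of error signals
  have hδ₁d : HasDerivAt δ₁ (x t • proj (b t) (w t)) t := by
    have he : δ₁ = fun s => b s - bstar := funext hδ₁
    rw [he]; exact hb.sub_const bstar
  have hδ₂d : HasDerivAt δ₂ (-(x t) ^ 2 * ⟪b t, w t⟫) t := by
    have he : δ₂ = fun s => x s - xstar := funext hδ₂
    rw [he]; exact hx.sub_const xstar
  have hδ₃d : HasDerivAt δ₃ ((ρ - (rhat t / r) • u₀) - w_d') t := by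
    have he : δ₃ = fun s => w s - w_d s := funext hδ₃
    rw [he]; exact hw.sub hwd
  -- derivative of each Lyapunov term
  have h1 : HasDerivAt (fun s => 1 / 2 * ⟪δ₁ s, δ₁ s⟫)
      (⟪δ₁ t, x t • proj (b t) (w t)⟫) t := by
    have h := (hδ₁d.inner (𝕜 := ℝ) hδ₁d).const_mul (1 / 2 : ℝ)
    refine h.congr_deriv ?_
    rw [real_inner_comm (x t • proj (b t) (w t)) (δ₁ t)]
    ring
  have h2 : HasDerivAt (fun s => 1 / 2 * δ₂ s ^ 2)
      (δ₂ t * (-(x t) ^ 2 * ⟪b t, w t⟫)) t := by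
    have h := (hδ₂d.pow 2).const_mul (1 / 2 : ℝ)
    refine h.congr_deriv ?_
    push_cast
    ring
  have h3 : HasDerivAt (fun s => 1 / 2 * ⟪δ₃ s, δ₃ s⟫)
      (⟪δ₃ t, (ρ - (rhat t / r) • u₀) - w_d'⟫) t := by
    have h := (hδ₃d.inner (𝕜 := ℝ) hδ₃d).const_mul (1 / 2 : ℝ)
    refine h.congr_deriv ?_
    rw [real_inner_comm ((ρ - (rhat t / r) • u₀) - w_d') (δ₃ t)]
    ring
  have h4 : HasDerivAt (fun s => 1 / (2 * k_r * r) * (r - rhat s) ^ 2)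
      (-((r - rhat t) / r * ⟪δ₃ t, u₀⟫)) t := by
    have hsub : HasDerivAt (fun s => r - rhat s) (-(k_r * ⟪δ₃ t, u₀⟫)) t := by
      have h0 := (hasDerivAt_const t r).sub hrhat; rw [zero_sub] at h0; exact h0
    have h := (hsub.pow 2).const_mul (1 / (2 * k_r * r) : ℝ)
    refine h.congr_deriv ?_
    push_cast
    field_simp
  have hAK : Matrix.toEuclideanLin K_ρ⁻¹ (Matrix.toEuclideanLin K_ρ (δ₃ t)) = δ₃ t := by
    rw [Matrix.toEuclideanLin_apply, Matrix.toEuclideanLin_apply]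
    simp [Matrix.mulVec_mulVec,
      Matrix.nonsing_inv_mul _ ((Matrix.isUnit_iff_isUnit_det _).mp hK_ρ.isUnit)]
  have hsymm : (Matrix.toEuclideanLin K_ρ⁻¹).IsSymmetric :=
    Matrix.isHermitian_iff_isSymmetric.mp hK_ρ.isHermitian.inv
  have hg : HasDerivAt (fun s => ρ - ρhat s) (-(Matrix.toEuclideanLin K_ρ (δ₃ t))) t := by
    have h0 := (hasDerivAt_const t ρ).sub hρhat; rw [zero_sub] at h0; exact h0
  have hAg : HasDerivAt (fun s => Matrix.toEuclideanLin K_ρ⁻¹ (ρ - ρhat s))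
      (Matrix.toEuclideanLin K_ρ⁻¹ (-(Matrix.toEuclideanLin K_ρ (δ₃ t)))) t := by
    have h := (LinearMap.toContinuousLinearMap
      (Matrix.toEuclideanLin K_ρ⁻¹)).hasFDerivAt.comp_hasDerivAt t hg
    simp only [Function.comp_def, LinearMap.coe_toContinuousLinearMap'] at h
    exact h
  have h5 : HasDerivAt
      (fun s => 1 / 2 * ⟪ρ - ρhat s, Matrix.toEuclideanLin K_ρ⁻¹ (ρ - ρhat s)⟫)
      (-⟪ρ - ρhat t, δ₃ t⟫) t := by
    have h := (hg.inner (𝕜 := ℝ) hAg).const_mul (1 / 2 : ℝ)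
    refine h.congr_deriv ?_
    rw [← hsymm (-(Matrix.toEuclideanLin K_ρ (δ₃ t))) (ρ - ρhat t)]
    simp only [map_neg, hAK, inner_neg_left, inner_neg_right]
    rw [real_inner_comm (δ₃ t) (ρ - ρhat t)]
    ring
  have hsum := (((h1.add h2).add h3).add h4).add h5
  have hfun : V₃ = fun s => 1 / 2 * ⟪δ₁ s, δ₁ s⟫ + 1 / 2 * δ₂ s ^ 2 +
      1 / 2 * ⟪δ₃ s, δ₃ s⟫ + 1 / (2 * k_r * r) * (r - rhat s) ^ 2 +
      1 / 2 * ⟪ρ - ρhat s, Matrix.toEuclideanLin K_ρ⁻¹ (ρ - ρhat s)⟫ := by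
    funext s
    rw [hV₃ s, real_inner_self_eq_norm_sq, real_inner_self_eq_norm_sq]
  have hV : HasDerivAt V₃
      (⟪δ₁ t, x t • proj (b t) (w t)⟫ + δ₂ t * (-(x t) ^ 2 * ⟪b t, w t⟫) +
        ⟪δ₃ t, (ρ - (rhat t / r) • u₀) - w_d'⟫ + -((r - rhat t) / r * ⟪δ₃ t, u₀⟫) +
        -⟪ρ - ρhat t, δ₃ t⟫) t := by
    rw [hfun]; exact hsum
  have halg : ⟪δ₁ t, x t • proj (b t) (w t)⟫ + δ₂ t * (-(x t) ^ 2 * ⟪b t, w t⟫) +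
        ⟪δ₃ t, (ρ - (rhat t / r) • u₀) - w_d'⟫ + -((r - rhat t) / r * ⟪δ₃ t, u₀⟫) +
        -⟪ρ - ρhat t, δ₃ t⟫ =
      -(k₁ * ⟪δ₁ t, proj (b t) (δ₁ t)⟫) - k₂ * (δ₂ t) ^ 2 -
        ⟪δ₃ t, Matrix.toEuclideanLin K₃ (δ₃ t)⟫ := by
    rw [hu₀]
    set m := Matrix.toEuclideanLin K₃ (δ₃ t) with hm
    rw [hδ₁ t, hδ₃ t, hw_d t, ← hδ₂ t]
    simp only [proj, inner_sub_left, inner_sub_right, inner_add_left, inner_add_right,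
      real_inner_smul_left, real_inner_smul_right, inner_neg_left, inner_neg_right]
    simp only [hBB, hSS, real_inner_comm]
    field_simp
    ring
  have hp1 : 0 ≤ ⟪δ₁ t, proj (b t) (δ₁ t)⟫ := by
    have he : ⟪δ₁ t, proj (b t) (δ₁ t)⟫ = ⟪proj (b t) (δ₁ t), proj (b t) (δ₁ t)⟫ := by
      simp only [proj, inner_sub_left, inner_sub_right, real_inner_smul_left,
        real_inner_smul_right, hBB]
      rw [real_inner_comm (δ₁ t) (b t)]
      ring
    rw [he]; exact real_inner_self_nonneg
  have hp3 : 0 ≤ ⟪δ₃ t, Matrix.toEuclideanLin K₃ (δ₃ t)⟫ := by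
    rw [EuclideanSpace.inner_eq_star_dotProduct, Matrix.ofLp_toEuclideanLin_apply]
    simpa [dotProduct_comm] using hK₃.dotProduct_mulVec_nonneg (WithLp.ofLp (δ₃ t))
  refine ⟨by rw [← halg]; exact hV, ?_⟩
  nlinarith [mul_nonneg hk₁.le hp1, mul_nonneg hk₂.le (sq_nonneg (δ₂ t)), hp3]
end

section
/- (Barbalat's lemma, as used in the convergence proof.) Let V : [0,∞) → ℝ be differentiable, bounded from below, with V'(t) ≤ 0 for all t ≥ 0, and suppose V' is uniformly continuous on [0,∞). Then V'(t) → 0 as t → ∞. -/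
/-!
Since `V' ≤ 0`, `V` is antitone, and being bounded below it converges at infinity. Uniform
continuity of the derivative gives, for each `ε`, a `δ` with
`|V (t + δ) - V t - δ * V' t| ≤ ε δ / 2` for all large `t`; since `V (t + δ) - V t → 0`, this
forces `|V' t| < ε` eventually.
-/

open Filter Set Topology

theorem norm_sub_sub_smul_le_of_norm_deriv_sub_le {E : Type*} [NormedAddCommGroup E]
    [NormedSpace ℝ E] {f f' : ℝ → E} {a b C : ℝ} {c : E} (hab : a ≤ b)
    (hf : ∀ x ∈ Icc a b, HasDerivAt f (f' x) x) (bound : ∀ x ∈ Ico a b, ‖f' x - c‖ ≤ C) :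
    ‖f b - f a - (b - a) • c‖ ≤ C * (b - a) := by
  have hg : ∀ x ∈ Icc a b,
      HasDerivWithinAt (fun x => f x - (x - a) • c) (f' x - c) (Icc a b) x := fun x hx => by
    simpa only [one_smul] using
      ((hf x hx).fun_sub (((hasDerivAt_id' x).sub_const a).smul_const c)).hasDerivWithinAt
  simpa [sub_right_comm] using
    norm_image_sub_le_of_norm_deriv_le_segment' hg bound b (right_mem_Icc.mpr hab)

theorem AntitoneOn.exists_tendsto_atTop_of_bddBelow {α β : Type*} [LinearOrder α]
    [ConditionallyCompleteLinearOrder β] [TopologicalSpace β] [OrderTopology β]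
    {f : α → β} {a : α} (hf : AntitoneOn f (Ici a)) (hbdd : BddBelow (f '' Ici a)) :
    ∃ L, Tendsto f atTop (𝓝 L) := by
  have hanti : Antitone (fun x => f (max x a)) := fun x y hxy =>
    hf (le_max_right x a) (le_max_right y a) (max_le_max_right a hxy)
  have hbdd' : BddBelow (range fun x => f (max x a)) :=
    hbdd.mono (range_subset_iff.mpr fun x => mem_image_of_mem f (le_max_right x a))
  refine ⟨_, (tendsto_atTop_ciInf hanti hbdd').congr' ?_⟩
  filter_upwards [eventually_ge_atTop a] with x hx
  rw [max_eq_left hx]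

theorem tendsto_nhds_zero_of_hasDerivAt_of_tendsto_of_uniformContinuousOn {E : Type*}
    [NormedAddCommGroup E] [NormedSpace ℝ E] {f f' : ℝ → E} {a : ℝ} {L : E}
    (hf : ∀ t ≥ a, HasDerivAt f (f' t) t) (hL : Tendsto f atTop (𝓝 L))
    (hf' : UniformContinuousOn f' (Ici a)) : Tendsto f' atTop (𝓝 0) := by
  refine Metric.tendsto_nhds.mpr fun ε hε => ?_
  obtain ⟨δ, hδ, hclose⟩ := Metric.uniformContinuousOn_iff.mp hf' (ε / 2) (half_pos hε)
  have hincr : Tendsto (fun t => f (t + δ) - f t) atTop (𝓝 0) := by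
    simpa using (hL.comp (tendsto_atTop_add_const_right _ δ tendsto_id)).sub hL
  filter_upwards [Metric.tendsto_nhds.mp hincr (ε * δ / 2) (by positivity),
    eventually_ge_atTop a] with t hincr_small hta
  rw [dist_zero_right] at hincr_small ⊢
  have hlinear : ‖f (t + δ) - f t - δ • f' t‖ ≤ ε / 2 * δ := by
    have hnear : ∀ x ∈ Ico t (t + δ), ‖f' x - f' t‖ ≤ ε / 2 := fun x hx => by
      rw [← dist_eq_norm]
      refine (hclose x (hta.trans hx.1) t hta ?_).le
      rw [Real.dist_eq, abs_of_nonneg (by linarith [hx.1])]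
      linarith [hx.2]
    simpa only [add_sub_cancel_left] using norm_sub_sub_smul_le_of_norm_deriv_sub_le
      (by linarith) (fun x hx => hf x (hta.trans hx.1)) hnear
  have hscaled : δ * ‖f' t‖ < δ * ε := calc
    δ * ‖f' t‖ = ‖δ • f' t‖ := by rw [norm_smul, Real.norm_of_nonneg hδ.le]
    _ ≤ ‖f (t + δ) - f t‖ + ‖f (t + δ) - f t - δ • f' t‖ := norm_le_norm_add_norm_sub _ _
    _ < ε * δ / 2 + ε / 2 * δ := add_lt_add_of_lt_of_le hincr_small hlinear
    _ = δ * ε := by ring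
  exact lt_of_mul_lt_mul_left hscaled hδ.le

/-- Barbalat's lemma, in the form used in the convergence proof. -/
theorem barbalat
    (V V' : ℝ → ℝ)
    (hdiff : ∀ t ≥ (0 : ℝ), HasDerivAt V (V' t) t)
    (hbdd : ∃ m : ℝ, ∀ t ≥ (0 : ℝ), m ≤ V t)
    (hneg : ∀ t ≥ (0 : ℝ), V' t ≤ 0)
    (hUC : UniformContinuousOn V' (Set.Ici 0)) :
    Tendsto V' atTop (nhds 0) := by
  obtain ⟨m, hm⟩ := hbdd
  have hanti : AntitoneOn V (Ici 0) :=
    antitoneOn_of_hasDerivWithinAt_nonpos (convex_Ici 0)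
      (fun t ht => (hdiff t ht).continuousAt.continuousWithinAt)
      (fun t ht => (hdiff t (interior_subset ht)).hasDerivWithinAt)
      fun t ht => hneg t (interior_subset ht)
  obtain ⟨L, hL⟩ :=
    hanti.exists_tendsto_atTop_of_bddBelow ⟨m, by rintro _ ⟨t, ht, rfl⟩; exact hm t ht⟩
  exact tendsto_nhds_zero_of_hasDerivAt_of_tendsto_of_uniformContinuousOn hdiff hL hUC
end

section
/- Let r > 0 and ρ, a_T ∈ ℝ³ with ρ = a_T / r, let b* ∈ ℝ³ be a constant unit vector and x* ∈ ℝ a constant, and let k₁, k₂ > 0. Let b, w, u : ℝ → ℝ³ and x : ℝ → ℝ with, at time t: ‖b(t)‖ = 1, x(t) ≠ 0, b differentiable with b' = x·Π_b w, x differentiable with x' = −x²·⟨b, w⟩, and w differentiable with w' = (1/r)(a_T − u). Suppose the desired velocity w_d(s) = (k₁/x(s))·Π_{b(s)} b* + (k₂/x(s)²)·(x(s) − x*)·b(s) is differentiable at t, and set δ₁ = b − b*, δ₂ = x − x*, δ₃ = w − w_d and V₂(s) = ½‖δ₁(s)‖² + ½δ₂(s)² + ½‖δ₃(s)‖². Then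 V₂ is differentiable at t with V₂'(t) = −k₁·⟨δ₁, Π_b δ₁⟩ − k₂·δ₂² + ⟨δ₃, x·Π_b δ₁ − x²·δ₂·b − w_d' + ρ − u/r⟩. -/
open scoped RealInnerProductSpace

set_option maxHeartbeats 1600000 in
theorem lyapunov_V2_derivative
    (r : ℝ) (hr : 0 < r)
    (ρ aT : EuclideanSpace ℝ (Fin 3)) (hρ : ρ = r⁻¹ • aT)
    (bstar : EuclideanSpace ℝ (Fin 3)) (hbstar : ‖bstar‖ = 1)
    (xstar k₁ k₂ : ℝ) (hk₁ : 0 < k₁) (hk₂ : 0 < k₂)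
    (b w u : ℝ → EuclideanSpace ℝ (Fin 3)) (x : ℝ → ℝ) (t : ℝ)
    (hbt : ‖b t‖ = 1) (hxt : x t ≠ 0)
    (hb : HasDerivAt b (x t • proj (b t) (w t)) t)
    (hx : HasDerivAt x (-(x t) ^ 2 * ⟪b t, w t⟫) t)
    (hw : HasDerivAt w (r⁻¹ • (aT - u t)) t)
    (w_d : ℝ → EuclideanSpace ℝ (Fin 3))
    (hw_d : ∀ s, w_d s =
      (k₁ / x s) • proj (b s) bstar + (k₂ / (x s) ^ 2 * (x s - xstar)) • b s)
    (w_d' : EuclideanSpace ℝ (Fin 3)) (hwd : HasDerivAt w_d w_d' t)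
    (V₂ : ℝ → ℝ)
    (hV₂ : ∀ s, V₂ s = 1 / 2 * ‖b s - bstar‖ ^ 2 + 1 / 2 * (x s - xstar) ^ 2 +
      1 / 2 * ‖w s - w_d s‖ ^ 2) :
    HasDerivAt V₂
      (-(k₁ * ⟪b t - bstar, proj (b t) (b t - bstar)⟫) - k₂ * (x t - xstar) ^ 2 +
        ⟪w t - w_d t,
          x t • proj (b t) (b t - bstar) - ((x t) ^ 2 * (x t - xstar)) • b t
            - w_d' + ρ - r⁻¹ • u t⟫) t := by
  have hb1 : ⟪b t, b t⟫ = 1 := by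
    rw [real_inner_self_eq_norm_sq, hbt]; norm_num
  have hbs1 : ⟪bstar, bstar⟫ = 1 := by
    rw [real_inner_self_eq_norm_sq, hbstar]; norm_num
  have hVe : V₂ = fun s => 1 / 2 * ⟪b s - bstar, b s - bstar⟫ +
      1 / 2 * ((x s - xstar) * (x s - xstar)) +
      1 / 2 * ⟪w s - w_d s, w s - w_d s⟫ := by
    funext s
    rw [hV₂ s, real_inner_self_eq_norm_sq, real_inner_self_eq_norm_sq]; ring
  rw [hVe]
  have h1 : HasDerivAt (fun s => b s - bstar) (x t • proj (b t) (w t)) t :=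
    hb.sub_const _
  have h2 : HasDerivAt (fun s => x s - xstar) (-(x t) ^ 2 * ⟪b t, w t⟫) t :=
    hx.sub_const _
  have h3 : HasDerivAt (fun s => w s - w_d s) (r⁻¹ • (aT - u t) - w_d') t :=
    hw.sub hwd
  have H := (((h1.inner ℝ h1).const_mul (1 / 2 : ℝ)).add
      ((h2.mul h2).const_mul (1 / 2 : ℝ))).add
      ((h3.inner ℝ h3).const_mul (1 / 2 : ℝ))
  convert H using 1
  case e'_4 => rfl
  case e'_5 => rfl
  case e'_8 => rfl
  have hwdt := hw_d t
  rw [hρ, hwdt]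
  simp only [proj, inner_sub_left, inner_sub_right, inner_smul_left, inner_smul_right,
    inner_add_left, inner_add_right, smul_sub, smul_smul, real_inner_comm (b t) bstar,
    real_inner_comm (b t) (w t), real_inner_comm (b t) (w_d t),
    real_inner_comm (b t) (w t - w_d t), RCLike.inner_apply, conj_trivial, hb1]
  simp only [real_inner_comm bstar (w t), real_inner_comm w_d' (b t),
    real_inner_comm w_d' bstar, real_inner_comm aT (w t), real_inner_comm aT (b t),
    real_inner_comm aT bstar, real_inner_comm (u t) (w t), real_inner_comm (u t) (b t),
    real_inner_comm (u t) bstar, real_inner_comm w_d' (w t), hbs1]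
  field_simp
  ring
end
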